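/- For all real x ≠ 0 and all real y, |x - y| - |x| = -y·(sgn x) + 2·∫₀^y (I(x ≤ s) - I(x ≤ 0)) ds, where sgn x = I(x>0) - I(x<0) and the integral is the signed integral from 0 to y of the indicator difference. -/
import Mathlib


open MeasureTheory intervalIntegral

private lemma knight_mono (c : ℝ) : Monotone (fun s : ℝ => if c ≤ s then (1:ℝ) else 0) := by
  intro s t hst
  dsimp only
  by_cases h : c ≤ s
  · simp [h, h.trans hst]
  · by_cases h' : c ≤ t <;> simp [h, h']

private lemma knight_intble (c a b : ℝ) :
    IntervalIntegrable (fun s : ℝ => if c ≤ s then (1:ℝ) else 0) volume a b :=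
  (knight_mono c).intervalIntegrable

private lemma knight_int_one (c a b : ℝ) (hca : c ≤ a) (hab : a ≤ b) :
    ∫ s in a..b, (if c ≤ s then (1:ℝ) else 0) = b - a := by
  have : ∫ s in a..b, (if c ≤ s then (1:ℝ) else 0) = ∫ _ in a..b, (1:ℝ) := by
    apply integral_congr
    intro s hs
    have h1 : a ≤ s := by
      have := hs.1
      rwa [inf_eq_left.2 hab] at this
    simp [hca.trans h1]
  rw [this]; simp

private lemma knight_int_zero (c a b : ℝ) (hab : a ≤ b) (hbc : b ≤ c) :
    ∫ s in a..b, (if c ≤ s then (1:ℝ) else 0) = 0 := by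
  apply integral_zero_ae
  filter_upwards [(Set.countable_singleton c).ae_notMem volume] with s hs hmem
  have h1 : s ≤ b := by
    rw [Set.uIoc_of_le hab] at hmem
    exact hmem.2
  have : ¬ c ≤ s := fun h => hs (le_antisymm ((h1.trans hbc).trans (le_refl c)) h ▸ rfl)
  have hne : s ≠ c := fun h => hs (by simp [h])
  have : ¬ c ≤ s := fun h => hne (le_antisymm (h1.trans hbc) h)
  simp [this]

private lemma knight_int (c a b : ℝ) :
    ∫ s in a..b, (if c ≤ s then (1:ℝ) else 0) = max b c - max a c := by
  have key : ∀ a b : ℝ, a ≤ b →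
      ∫ s in a..b, (if c ≤ s then (1:ℝ) else 0) = max b c - max a c := by
    intro a b hab
    rcases le_or_gt c a with hca | hac
    · rw [knight_int_one c a b hca hab, max_eq_left (hca.trans hab), max_eq_left hca]
    · rcases le_or_gt b c with hbc | hcb
      · rw [knight_int_zero c a b hab hbc, max_eq_right hbc, max_eq_right hac.le, sub_self]
      · have h1 := knight_int_zero c a c hac.le le_rfl
        have h2 := knight_int_one c c b le_rfl hcb.le
        have hadd := integral_add_adjacent_intervals (knight_intble c a c) (knight_intble c c b)
        rw [h1, h2, zero_add] at hadd
        rw [← hadd, max_eq_left hcb.le, max_eq_right hac.le]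
  rcases le_total a b with hab | hba
  · exact key a b hab
  · rw [← neg_inj, ← integral_symm, key b a hba]
    ring

/-- Knight's identity: for `x ≠ 0` and any `y`,
`|x - y| - |x| = -y·sgn(x) + 2∫₀^y (I(x ≤ s) - I(x ≤ 0)) ds`. -/
theorem knight_identity (x y : ℝ) (hx : x ≠ 0) :
    |x - y| - |x| =
      -y * ((if 0 < x then (1:ℝ) else 0) - (if x < 0 then (1:ℝ) else 0)) +
        2 * ∫ s in (0:ℝ)..y, ((if x ≤ s then (1:ℝ) else 0) - (if x ≤ 0 then (1:ℝ) else 0)) := by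
  have hsplit : ∫ s in (0:ℝ)..y, ((if x ≤ s then (1:ℝ) else 0) - (if x ≤ 0 then (1:ℝ) else 0))
      = (max y x - max 0 x) - y * (if x ≤ 0 then (1:ℝ) else 0) := by
    rw [integral_sub (knight_intble x 0 y) (intervalIntegrable_const), knight_int,
      intervalIntegral.integral_const, smul_eq_mul, sub_zero, mul_comm]
  rw [hsplit]
  rcases hx.lt_or_gt with hneg | hpos
  · rw [if_neg (not_lt.2 hneg.le), if_pos hneg, if_pos hneg.le,
      max_eq_left hneg.le, abs_of_neg hneg]
    rcases le_total x y with h | h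
    · rw [abs_of_nonpos (by linarith), max_eq_left h]; ring
    · rw [abs_of_nonneg (by linarith), max_eq_right h]; ring
  · rw [if_pos hpos, if_neg (not_lt.2 hpos.le), if_neg (not_le.2 hpos),
      max_eq_right hpos.le, abs_of_pos hpos]
    rcases le_total x y with h | h
    · rw [abs_of_nonpos (by linarith), max_eq_left h]; ring
    · rw [abs_of_nonneg (by linarith), max_eq_right h]; ring
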